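/- Let (M,d) be a metric space and let {U_i} be a family of subsets such that the distance between any two distinct U_i, U_j is at least ε > 0. If p : [0,1] → M is a rectifiable path from x to y and S = M \ ⋃ U_i, then p can intersect at most ⌊length(p ∩ S)/ε⌋ + 1 of the sets U_i. -/
import Mathlib
open Set
open scoped ENNReal NNReal

lemma le_infDist_aux {M : Type*} [MetricSpace M] {x : M} {s : Set M} (hs : s.Nonempty)
    {c : ℝ} (hc : 0 ≤ c) (h : ∀ y ∈ s, c ≤ dist x y) : c ≤ Metric.infDist x s := by
  have h1 : ENNReal.ofReal c ≤ EMetric.infEdist x s :=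
    EMetric.le_infEdist.mpr fun y hy => by
      rw [edist_dist]; exact ENNReal.ofReal_le_ofReal (h y hy)
  calc c = (ENNReal.ofReal c).toReal := (ENNReal.toReal_ofReal hc).symm
    _ ≤ (EMetric.infEdist x s).toReal := ENNReal.toReal_mono (Metric.infEdist_ne_top hs) h1

lemma piece_aux {M ι : Type*} [MetricSpace M] (U : ι → Set M) (ε : ℝ)
    (hsep : ∀ i j, i ≠ j → ∀ x ∈ U i, ∀ y ∈ U j, ε ≤ dist x y)
    (p : ℝ → M) {a b : ℝ} (hab : a ≤ b) (hp : ContinuousOn p (Icc a b))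
    {i j : ι} (hij : i ≠ j) (ha : p a ∈ U i) (hb : p b ∈ U j)
    {c d : ℝ} (hc : 0 < c) (hcd : c < d) (hd : d < ε) :
    ENNReal.ofReal (d - c) ≤ eVariationOn p (Icc a b ∩ p ⁻¹' (⋃ i, U i)ᶜ) := by
  have hUne : (U i).Nonempty := ⟨p a, ha⟩
  set f : ℝ → ℝ := fun t => Metric.infDist (p t) (U i) with hfdef
  have hfc : ContinuousOn f (Icc a b) :=
    (Metric.continuous_infDist_pt (U i)).comp_continuousOn hp
  have hfa : f a = 0 := Metric.infDist_zero_of_mem ha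
  have hfb : ε ≤ f b :=
    le_infDist_aux hUne (le_of_lt (lt_trans hc (lt_trans hcd hd)))
      (fun z hz => by rw [dist_comm]; exact hsep i j hij z hz _ hb)
  have hivt := intermediate_value_Icc hab hfc
  obtain ⟨s, hs, hfs⟩ : c ∈ f '' Icc a b := hivt
    ⟨by rw [hfa]; exact hc.le, by linarith⟩
  obtain ⟨t, ht, hft⟩ : d ∈ f '' Icc a b := hivt
    ⟨by rw [hfa]; linarith, by linarith⟩
  have memS : ∀ u : ℝ, 0 < f u → f u < ε → p u ∈ (⋃ i, U i)ᶜ := by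
    intro u hpos hlt
    simp only [mem_compl_iff, mem_iUnion, not_exists]
    intro m hm
    rcases eq_or_ne m i with rfl | hmi
    · rw [show f u = 0 from Metric.infDist_zero_of_mem hm] at hpos
      exact lt_irrefl _ hpos
    · have : ε ≤ f u := le_infDist_aux hUne (by linarith)
        (fun z hz => by rw [dist_comm]; exact hsep i m (Ne.symm hmi) z hz _ hm)
      exact absurd hlt (not_lt.mpr this)
  have hsS : s ∈ Icc a b ∩ p ⁻¹' (⋃ i, U i)ᶜ :=
    ⟨hs, memS s (by rw [hfs]; exact hc) (by rw [hfs]; linarith)⟩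
  have htS : t ∈ Icc a b ∩ p ⁻¹' (⋃ i, U i)ᶜ :=
    ⟨ht, memS t (by rw [hft]; linarith) (by rw [hft]; exact hd)⟩
  calc ENNReal.ofReal (d - c) ≤ edist (p s) (p t) := by
        rw [edist_dist]
        apply ENNReal.ofReal_le_ofReal
        have h2 : f t ≤ f s + dist (p t) (p s) := Metric.infDist_le_infDist_add_dist
        rw [hfs, hft, dist_comm (p t) (p s)] at h2
        linarith
    _ ≤ _ := eVariationOn.edist_le p hsS htS

lemma count_aux {M ι : Type*} [MetricSpace M] (U : ι → Set M) (ε : ℝ) (hε : 0 < ε)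
    (hsep : ∀ i j, i ≠ j → ∀ x ∈ U i, ∀ y ∈ U j, ε ≤ dist x y)
    (p : ℝ → M) (hp : ContinuousOn p (Icc 0 1))
    (L : ℝ) (hL : 0 ≤ L)
    (hlen : eVariationOn p (Icc 0 1 ∩ p ⁻¹' ((⋃ i, U i)ᶜ)) = ENNReal.ofReal L)
    (τ : ι → ℝ) (T : Finset ι)
    (hτ1 : ∀ i ∈ T, τ i ∈ Icc (0:ℝ) 1) (hτ2 : ∀ i ∈ T, p (τ i) ∈ U i)
    {c d : ℝ} (hc : 0 < c) (hcd : c < d) (hd : d < ε) :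
    ((T.card : ℝ) - 1) * (d - c) ≤ L := by
  classical
  rcases Nat.eq_zero_or_pos T.card with h0 | hpos
  · rw [h0]; push_cast; nlinarith
  have hτinj : Set.InjOn τ T := by
    intro i hi j hj hij
    by_contra hne
    have h1 := hsep i j hne (p (τ i)) (hτ2 i hi) (p (τ j)) (hτ2 j hj)
    rw [hij, dist_self] at h1
    linarith
  set F : Finset ℝ := T.image τ with hF
  have hFcard : F.card = T.card := Finset.card_image_of_injOn hτinj
  set m : Fin T.card ↪o ℝ := F.orderEmbOfFin hFcard with hm
  have hmmem : ∀ l, m l ∈ F := fun l => F.orderEmbOfFin_mem hFcard l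
  have hmstrict : StrictMono m := (F.orderEmbOfFin hFcard).strictMono
  -- choose index for each l
  have hex : ∀ l : Fin T.card, ∃ i, i ∈ T ∧ τ i = m l := by
    intro l
    obtain ⟨i, hiT, hτi⟩ := Finset.mem_image.mp (hmmem l)
    exact ⟨i, hiT, hτi⟩
  set idx : Fin T.card → ι := fun l => (hex l).choose with hidx
  have hidxT : ∀ l, idx l ∈ T := fun l => (hex l).choose_spec.1
  have hidxτ : ∀ l, τ (idx l) = m l := fun l => (hex l).choose_spec.2
  have hpU : ∀ l, p (m l) ∈ U (idx l) := fun l => (hidxτ l) ▸ hτ2 _ (hidxT l)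
  have hm01 : ∀ l, m l ∈ Icc (0:ℝ) 1 := fun l => (hidxτ l) ▸ hτ1 _ (hidxT l)
  have hidxne : ∀ l l' : Fin T.card, l ≠ l' → idx l ≠ idx l' := by
    intro l l' hll hid
    apply hll
    have : m l = m l' := by rw [← hidxτ, ← hidxτ, hid]
    exact m.injective this
  have h0lt : (0 : ℕ) < T.card := hpos
  -- induction claim
  have claim : ∀ n : ℕ, ∀ hn : n < T.card,
      (n : ℝ≥0∞) * ENNReal.ofReal (d - c) ≤
        eVariationOn p (Icc (m ⟨0, h0lt⟩) (m ⟨n, hn⟩) ∩ p ⁻¹' (⋃ i, U i)ᶜ) := by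
    intro n
    induction n with
    | zero => intro hn; simp
    | succ n ih =>
      intro hn
      have hn' : n < T.card := Nat.lt_of_succ_lt hn
      have hstep : ENNReal.ofReal (d - c) ≤
          eVariationOn p (Icc (m ⟨n, hn'⟩) (m ⟨n+1, hn⟩) ∩ p ⁻¹' (⋃ i, U i)ᶜ) := by
        have hlt : (⟨n, hn'⟩ : Fin T.card) < ⟨n+1, hn⟩ := by
          simp [Fin.lt_def]
        refine piece_aux U ε hsep p (hmstrict hlt).le
          (hp.mono (Icc_subset_Icc (hm01 _).1 (hm01 _).2))
          (hidxne _ _ ?_) (hpU _) (hpU _) hc hcd hd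
        simp [Fin.ext_iff]
      have hord : ∀ x ∈ Icc (m ⟨0, h0lt⟩) (m ⟨n, hn'⟩) ∩ p ⁻¹' (⋃ i, U i)ᶜ,
          ∀ y ∈ Icc (m ⟨n, hn'⟩) (m ⟨n+1, hn⟩) ∩ p ⁻¹' (⋃ i, U i)ᶜ, x ≤ y :=
        fun x hx y hy => le_trans hx.1.2 hy.1.1
      have hsub : (Icc (m ⟨0, h0lt⟩) (m ⟨n, hn'⟩) ∩ p ⁻¹' (⋃ i, U i)ᶜ) ∪
          (Icc (m ⟨n, hn'⟩) (m ⟨n+1, hn⟩) ∩ p ⁻¹' (⋃ i, U i)ᶜ) ⊆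
          Icc (m ⟨0, h0lt⟩) (m ⟨n+1, hn⟩) ∩ p ⁻¹' (⋃ i, U i)ᶜ := by
        have hle1 : m ⟨0, h0lt⟩ ≤ m ⟨n, hn'⟩ := hmstrict.monotone (by simp [Fin.le_def])
        have hle2 : m ⟨n, hn'⟩ ≤ m ⟨n+1, hn⟩ := hmstrict.monotone (by simp [Fin.le_def])
        rintro x (⟨hx1, hx2⟩ | ⟨hx1, hx2⟩)
        · exact ⟨⟨hx1.1, hx1.2.trans hle2⟩, hx2⟩
        · exact ⟨⟨hle1.trans hx1.1, hx1.2⟩, hx2⟩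
      calc ((n+1 : ℕ) : ℝ≥0∞) * ENNReal.ofReal (d - c)
          = (n : ℝ≥0∞) * ENNReal.ofReal (d - c) + ENNReal.ofReal (d - c) := by
            push_cast; ring
        _ ≤ eVariationOn p (Icc (m ⟨0, h0lt⟩) (m ⟨n, hn'⟩) ∩ p ⁻¹' (⋃ i, U i)ᶜ) +
            eVariationOn p (Icc (m ⟨n, hn'⟩) (m ⟨n+1, hn⟩) ∩ p ⁻¹' (⋃ i, U i)ᶜ) :=
            add_le_add (ih hn') hstep
        _ ≤ eVariationOn p ((Icc (m ⟨0, h0lt⟩) (m ⟨n, hn'⟩) ∩ p ⁻¹' (⋃ i, U i)ᶜ) ∪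
            (Icc (m ⟨n, hn'⟩) (m ⟨n+1, hn⟩) ∩ p ⁻¹' (⋃ i, U i)ᶜ)) :=
            eVariationOn.add_le_union p hord
        _ ≤ _ := eVariationOn.mono p hsub
  have hlast : T.card - 1 < T.card := Nat.sub_lt hpos one_pos
  have h1 := claim (T.card - 1) hlast
  have h2 : eVariationOn p (Icc (m ⟨0, h0lt⟩) (m ⟨T.card - 1, hlast⟩) ∩ p ⁻¹' (⋃ i, U i)ᶜ)
      ≤ ENNReal.ofReal L := by
    rw [← hlen]
    exact eVariationOn.mono p (inter_subset_inter_left _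
      (Icc_subset_Icc (hm01 _).1 (hm01 _).2))
  have h3 : ((T.card - 1 : ℕ) : ℝ≥0∞) * ENNReal.ofReal (d - c) ≤ ENNReal.ofReal L :=
    le_trans h1 h2
  have h4 : ENNReal.ofReal (((T.card - 1 : ℕ) : ℝ) * (d - c)) ≤ ENNReal.ofReal L := by
    rw [ENNReal.ofReal_mul (by positivity)]
    rwa [ENNReal.ofReal_natCast]
  have h5 : ((T.card - 1 : ℕ) : ℝ) * (d - c) ≤ L :=
    (ENNReal.ofReal_le_ofReal_iff hL).mp h4
  have h6 : ((T.card : ℝ) - 1) = ((T.card - 1 : ℕ) : ℝ) := by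
    rw [Nat.cast_sub hpos]; norm_num
  rw [h6]; exact h5

/-- If subsets `U i` of a metric space are pairwise at distance at least `ε > 0`, and
`p : [0,1] → M` is a rectifiable path from `x` to `y`, with `L` the length of the part of `p`
lying in the complement `S` of the union of the `U i`, then `p` can meet at most
`⌊L/ε⌋ + 1` of the sets `U i`. -/
theorem stmt0 {M ι : Type*} [MetricSpace M] (U : ι → Set M) (ε : ℝ) (hε : 0 < ε)
    (hsep : ∀ i j, i ≠ j → ∀ x ∈ U i, ∀ y ∈ U j, ε ≤ dist x y)
    (p : ℝ → M) (x y : M) (hx : p 0 = x) (hy : p 1 = y)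
    (hp : ContinuousOn p (Icc 0 1))
    (L : ℝ) (hL : 0 ≤ L)
    (hrect : eVariationOn p (Icc 0 1) ≠ ⊤)
    (hlen : eVariationOn p (Icc 0 1 ∩ p ⁻¹' ((⋃ i, U i)ᶜ)) = ENNReal.ofReal L) :
    {i | ∃ t ∈ Icc (0:ℝ) 1, p t ∈ U i}.Finite ∧
      {i | ∃ t ∈ Icc (0:ℝ) 1, p t ∈ U i}.ncard ≤ ⌊L / ε⌋₊ + 1 := by
  classical
  set I := {i | ∃ t ∈ Icc (0:ℝ) 1, p t ∈ U i} with hI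
  set τ : ι → ℝ := fun i => if h : ∃ t ∈ Icc (0:ℝ) 1, p t ∈ U i then h.choose else 0 with hτ
  have hτ12 : ∀ i ∈ I, τ i ∈ Icc (0:ℝ) 1 ∧ p (τ i) ∈ U i := by
    intro i hi
    have hi' : ∃ t ∈ Icc (0:ℝ) 1, p t ∈ U i := hi
    simp only [hτ, dif_pos hi']
    exact ⟨hi'.choose_spec.1, hi'.choose_spec.2⟩
  have hτ1 : ∀ i ∈ I, τ i ∈ Icc (0:ℝ) 1 := fun i hi => (hτ12 i hi).1
  have hτ2 : ∀ i ∈ I, p (τ i) ∈ U i := fun i hi => (hτ12 i hi).2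
  have key : ∀ T : Finset ι, ↑T ⊆ I → ∀ c d : ℝ, 0 < c → c < d → d < ε →
      ((T.card : ℝ) - 1) * (d - c) ≤ L := by
    intro T hT c d hc hcd hd
    exact count_aux U ε hε hsep p hp L hL hlen τ T
      (fun i hi => hτ1 i (hT hi)) (fun i hi => hτ2 i (hT hi)) hc hcd hd
  have keyr : ∀ T : Finset ι, ↑T ⊆ I → ∀ r : ℝ, 0 < r → r < ε →
      ((T.card : ℝ) - 1) * r ≤ L := by
    intro T hT r hr hrε
    have := key T hT ((ε - r)/2) ((ε + r)/2) (by linarith) (by linarith) (by linarith)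
    have heq : (ε + r)/2 - (ε - r)/2 = r := by ring
    rwa [heq] at this
  have hfin : I.Finite := by
    by_contra hinffin
    have hinf : I.Infinite := hinffin
    obtain ⟨N, hN⟩ := exists_nat_gt (L / (ε/2) + 2)
    obtain ⟨t, htI, htfin, htcard⟩ := hinf.exists_subset_ncard_eq N
    have hTcard : htfin.toFinset.card = N := by
      rw [← htcard, Set.ncard_eq_toFinset_card _ htfin]
    have hTsub : ↑htfin.toFinset ⊆ I := by rwa [Set.Finite.coe_toFinset]
    have h1 := keyr htfin.toFinset hTsub (ε/2) (by linarith) (by linarith)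
    rw [hTcard] at h1
    have hq : 0 < ε/2 := by linarith
    have h2 : (N : ℝ) - 1 ≤ L / (ε/2) := by
      rw [le_div_iff₀ hq]; linarith
    have h3 : L / (ε/2) + 2 < (N : ℝ) := hN
    linarith
  refine ⟨hfin, ?_⟩
  set k := I.ncard with hk
  rcases Nat.eq_zero_or_pos k with h0 | hpos
  · omega
  have hTcard : hfin.toFinset.card = k := by rw [hk, Set.ncard_eq_toFinset_card _ hfin]
  have hTsub : ↑hfin.toFinset ⊆ I := by rw [Set.Finite.coe_toFinset]
  have hker : ∀ r : ℝ, 0 < r → r < ε → ((k : ℝ) - 1) * r ≤ L := by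
    intro r hr hrε
    have := keyr hfin.toFinset hTsub r hr hrε
    rwa [hTcard] at this
  have hKε : ((k : ℝ) - 1) * ε ≤ L := by
    rcases le_or_gt ((k:ℝ) - 1) 0 with hK0 | hK0
    · nlinarith
    · by_contra hcon
      push_neg at hcon
      set K := (k : ℝ) - 1 with hK
      have hLK : 0 ≤ L / K := div_nonneg hL hK0.le
      have hLKε : L / K < ε := by
        rw [div_lt_iff₀ hK0]; linarith [mul_comm K ε]
      set r := (L / K + ε) / 2 with hr
      have hr0 : 0 < r := by positivity
      have hrε : r < ε := by rw [hr]; linarith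
      have := hker r hr0 hrε
      have : K * (L / K) < K * r := by
        apply mul_lt_mul_of_pos_left _ hK0
        rw [hr]; linarith
      rw [mul_div_cancel₀ _ (ne_of_gt hK0)] at this
      linarith [hker r hr0 hrε]
  have hfloor : k - 1 ≤ ⌊L / ε⌋₊ := by
    apply Nat.le_floor
    have hcast : ((k - 1 : ℕ) : ℝ) = (k : ℝ) - 1 := by
      rw [Nat.cast_sub hpos]; norm_num
    rw [hcast, le_div_iff₀ hε]
    exact hKε
  omega
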